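/- arXiv:1406.6733 — 10 statements merged into one kernel-verified Lean document; each statement's English description precedes it below -/
import Mathlib

section
/- Let E be a Banach space and ℵ an uncountable cardinal. If for every cardinal κ < ℵ, every bounded operator from a closed subspace of ℓ₁(κ) into E extends to a bounded operator on ℓ₁(κ), then E is complemented in every Banach space X containing E as a closed subspace with dens(X/E) < ℵ. -/
/-!
Choose a dense set `s ⊆ X ⧸ E` with `#s = dens (X ⧸ E) < ℵ`. Successive approximation turns the
bounded family `s ∩ ball 0 1` into a surjection `q : ℓ₁(s) → X ⧸ E`, and projectivity of `ℓ₁` lifts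
it to `Q : ℓ₁(s) → X`. `Q` maps `ker q` into `E`; extend that restriction to `T : ℓ₁(s) → E`.
Then `Q - T` vanishes on `ker q`, so by the open mapping theorem it factors as `L ∘ q`, and `L` is
a bounded right inverse of the quotient map `π`. Finally `id - L ∘ π` is a projection onto `E`.
-/

open Cardinal

/-- The density character of a topological space: the least cardinality of a dense subset. -/
noncomputable def dens (X : Type) [TopologicalSpace X] : Cardinal :=
  sInf {c | ∃ s : Set X, Dense s ∧ #s = c}

open Function Filter Topology

theorem Submodule.closedComplemented_of_hasRightInverse_mkQL {R M : Type*} [Ring R]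
    [AddCommGroup M] [Module R M] [TopologicalSpace M] [IsTopologicalAddGroup M]
    (p : Submodule R M) (h : p.mkQL.HasRightInverse) : p.ClosedComplemented := by
  obtain ⟨L, hL⟩ := h
  have hmem : ∀ x, (ContinuousLinearMap.id R M - L.comp p.mkQL) x ∈ p := fun x => by
    have hx : (Submodule.Quotient.mk (L (Submodule.Quotient.mk x)) : M ⧸ p) =
        Submodule.Quotient.mk x := hL _
    simp [← Submodule.Quotient.mk_eq_zero, hx]
  refine ⟨(ContinuousLinearMap.id R M - L.comp p.mkQL).codRestrict p hmem, fun x => ?_⟩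
  ext
  simp [(Submodule.Quotient.mk_eq_zero p).2 x.2]

section Banach

variable {𝕜 : Type*} [NontriviallyNormedField 𝕜]
  {V W : Type*} [NormedAddCommGroup V] [NormedSpace 𝕜 V] [CompleteSpace V]
  [NormedAddCommGroup W] [NormedSpace 𝕜 W]

theorem ContinuousLinearMap.surjective_of_exists_approx_preimage (f : V →L[𝕜] W) {C : ℝ}
    (h : ∀ y, ∃ x, ‖y - f x‖ ≤ ‖y‖ / 2 ∧ ‖x‖ ≤ C * ‖y‖) : Surjective f := by
  choose g hg using h
  intro y
  set r : ℕ → W := fun n => (fun z => z - f (g z))^[n] y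
  have hr_succ : ∀ n, r (n + 1) = r n - f (g (r n)) := fun n =>
    iterate_succ_apply' (fun z => z - f (g z)) n y
  have hr_le : ∀ n, ‖r n‖ ≤ ‖y‖ * (1 / 2) ^ n := by
    intro n
    induction n with
    | zero => simp [r]
    | succ n ih =>
      rw [hr_succ, pow_succ]
      linarith [(hg (r n)).1]
  have hr_lim : Tendsto r atTop (𝓝 0) :=
    squeeze_zero_norm hr_le <| by
      simpa using (tendsto_pow_atTop_nhds_zero_of_lt_one (by norm_num : (0 : ℝ) ≤ 1 / 2)
        (by norm_num)).const_mul ‖y‖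
  have hsum : Summable fun n => g (r n) :=
    .of_norm_bounded (summable_geometric_two.mul_left (|C| * ‖y‖)) fun n =>
      calc ‖g (r n)‖ ≤ C * ‖r n‖ := (hg (r n)).2
        _ ≤ |C| * (‖y‖ * (1 / 2) ^ n) := by gcongr; exacts [le_abs_self C, hr_le n]
        _ = |C| * ‖y‖ * (1 / 2) ^ n := by ring
  refine ⟨∑' n, g (r n), tendsto_nhds_unique (hsum.hasSum.mapL f).tendsto_sum_nat ?_⟩
  have hstep : ∀ n, f (g (r n)) = r n - r (n + 1) := fun n => by rw [hr_succ, sub_sub_cancel]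
  have hpartial : ∀ n, ∑ i ∈ Finset.range n, f (g (r i)) = y - r n := fun n => by
    simp_rw [hstep, Finset.sum_range_sub']
    rfl
  simpa [hpartial] using tendsto_const_nhds.sub hr_lim

variable [CompleteSpace W]

theorem ContinuousLinearMap.exists_comp_eq_of_ker_le {Z : Type*} [AddCommGroup Z] [Module 𝕜 Z]
    [TopologicalSpace Z] (q : V →L[𝕜] W) (hq : Surjective q) (S : V →L[𝕜] Z)
    (hS : q.ker ≤ S.ker) : ∃ L : W →L[𝕜] Z, L.comp q = S := by
  let L : W →ₗ[𝕜] Z := q.ker.liftQ S hS ∘ₗ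
    ((q : V →ₗ[𝕜] W).quotKerEquivOfSurjective hq).symm.toLinearMap
  have hL : ∀ v, L (q v) = S v := fun v =>
    congrArg (q.ker.liftQ (S : V →ₗ[𝕜] Z) hS)
      ((q : V →ₗ[𝕜] W).quotKerEquivOfSurjective_symm_apply hq v)
  have hL_cont : Continuous L :=
    (q.isQuotientMap hq).continuous_iff.mpr (by simpa [comp_def, hL] using S.continuous)
  exact ⟨⟨L, hL_cont⟩, ContinuousLinearMap.ext hL⟩

theorem Submodule.closedComplemented_of_forall_exists_extend {X : Type*} [NormedAddCommGroup X]
    [NormedSpace 𝕜 X] [CompleteSpace X] (p : Submodule 𝕜 X) [IsClosed (p : Set X)]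
    (q : V →L[𝕜] X ⧸ p) (hq : Surjective q) (Q : V →L[𝕜] X) (hQ : p.mkQL.comp Q = q)
    (hext : ∀ t : q.ker →L[𝕜] p, ∃ T : V →L[𝕜] p, ∀ y : q.ker, T y = t y) :
    p.ClosedComplemented := by
  have hQ_mem : ∀ y : q.ker, Q y ∈ p := fun y => by
    rw [← Submodule.Quotient.mk_eq_zero]
    exact (congr($hQ y)).trans y.2
  obtain ⟨T, hT⟩ := hext ((Q.comp q.ker.subtypeL).codRestrict p hQ_mem)
  set S := Q - p.subtypeL.comp T
  have hπS : ∀ v, p.mkQL (S v) = q v := fun v => by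
    simp [S, ← hQ]
  have hS : q.ker ≤ S.ker := fun y hy => by
    change Q y - (T y : X) = 0
    rw [hT ⟨y, hy⟩]
    exact sub_self _
  obtain ⟨L, hL⟩ := q.exists_comp_eq_of_ker_le hq S hS
  refine p.closedComplemented_of_hasRightInverse_mkQL ⟨L, fun z => ?_⟩
  obtain ⟨v, rfl⟩ := hq z
  exact congr(p.mkQL ($hL v)).trans (hπS v)

end Banach

section LpOne

variable {𝕜 : Type*} [NontriviallyNormedField 𝕜] {I : Type*}

theorem lp.summable_norm_of_one {E : I → Type*} [∀ i, NormedAddCommGroup (E i)] (f : lp E 1) :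
    Summable fun i => ‖f i‖ := by
  simpa using (lp.memℓp f).summable (by norm_num)

theorem lp.norm_eq_tsum_norm_of_one {E : I → Type*} [∀ i, NormedAddCommGroup (E i)]
    (f : lp E 1) : ‖f‖ = ∑' i, ‖f i‖ := by
  simpa using lp.norm_eq_tsum_rpow (by norm_num) f

variable {Z : Type*} [NormedAddCommGroup Z] [NormedSpace 𝕜 Z] {x : I → Z} {C : ℝ}

theorem lp.summable_norm_smul_of_norm_le (hC : ∀ i, ‖x i‖ ≤ C) (f : lp (fun _ : I => 𝕜) 1) :
    Summable fun i => ‖f i • x i‖ :=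
  .of_nonneg_of_le (fun _ => norm_nonneg _)
    (fun i => by rw [norm_smul]; exact mul_le_mul_of_nonneg_left (hC i) (norm_nonneg _))
    ((lp.summable_norm_of_one f).mul_right C)

variable [CompleteSpace Z]

variable (𝕜) in
noncomputable def lpOneLift (x : I → Z) (C : ℝ) (hC : ∀ i, ‖x i‖ ≤ C) :
    lp (fun _ : I => 𝕜) 1 →L[𝕜] Z :=
  LinearMap.mkContinuous
    { toFun := fun f => ∑' i, f i • x i
      map_add' := fun f g => by
        simp only [lp.coeFn_add, Pi.add_apply, add_smul]
        exact (lp.summable_norm_smul_of_norm_le hC f).of_norm.tsum_add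
          (lp.summable_norm_smul_of_norm_le hC g).of_norm
      map_smul' := fun c f => by
        simp only [lp.coeFn_smul, Pi.smul_apply, smul_assoc, RingHom.id_apply]
        exact (lp.summable_norm_smul_of_norm_le hC f).of_norm.tsum_const_smul c }
    C fun f =>
      calc ‖∑' i, f i • x i‖ ≤ ∑' i, ‖f i‖ * C :=
            tsum_of_norm_bounded ((lp.summable_norm_of_one f).mul_right C).hasSum fun i => by
              rw [norm_smul]; exact mul_le_mul_of_nonneg_left (hC i) (norm_nonneg _)
        _ = C * ‖f‖ := by rw [lp.norm_eq_tsum_norm_of_one, tsum_mul_right, mul_comm]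

theorem lpOneLift_apply (hC : ∀ i, ‖x i‖ ≤ C) (f : lp (fun _ : I => 𝕜) 1) :
    lpOneLift 𝕜 x C hC f = ∑' i, f i • x i :=
  rfl

theorem lpOneLift_single [DecidableEq I] (hC : ∀ i, ‖x i‖ ≤ C) (i : I) (c : 𝕜) :
    lpOneLift 𝕜 x C hC (lp.single 1 i c) = c • x i := by
  rw [lpOneLift_apply, tsum_eq_single i fun j hj => by rw [lp.single_apply_ne _ _ _ hj, zero_smul],
    lp.single_apply_self]

theorem ContinuousLinearMap.hasSum_lp_one [DecidableEq I] {Y : Type*} [NormedAddCommGroup Y]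
    [NormedSpace 𝕜 Y] (T : lp (fun _ : I => 𝕜) 1 →L[𝕜] Y) (f : lp (fun _ : I => 𝕜) 1) :
    HasSum (fun i => f i • T (lp.single 1 i 1)) (T f) := by
  simpa [← map_smul, ← lp.single_smul] using (lp.hasSum_single ENNReal.one_ne_top f).mapL T

theorem Submodule.exists_mkQL_comp_eq_of_lp_one {X : Type*} [NormedAddCommGroup X]
    [NormedSpace 𝕜 X] (p : Submodule 𝕜 X) [IsClosed (p : Set X)]
    [CompleteSpace X] (T : lp (fun _ : I => 𝕜) 1 →L[𝕜] X ⧸ p) :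
    ∃ T' : lp (fun _ : I => 𝕜) 1 →L[𝕜] X, p.mkQL.comp T' = T := by
  classical
  choose x hx_mk hx_norm using fun i => Submodule.Quotient.norm_mk_lt (T (lp.single 1 i 1)) one_pos
  have hx : ∀ i, ‖x i‖ ≤ ‖T‖ + 1 := fun i =>
    calc ‖x i‖ ≤ ‖T (lp.single 1 i 1)‖ + 1 := (hx_norm i).le
      _ ≤ ‖T‖ + 1 := by
        grw [T.le_opNorm, lp.norm_single (by norm_num), norm_one, mul_one]
  refine ⟨lpOneLift 𝕜 x _ hx, ContinuousLinearMap.ext fun f => ?_⟩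
  rw [ContinuousLinearMap.comp_apply, lpOneLift_apply, p.mkQL.map_tsum
    (lp.summable_norm_smul_of_norm_le hx f).of_norm]
  simpa [hx_mk] using (T.hasSum_lp_one f).tsum_eq

end LpOne

theorem exists_surjective_lp_one_of_dense {Z : Type*} [NormedAddCommGroup Z] [NormedSpace ℝ Z]
    [CompleteSpace Z] {s : Set Z} (hs : Dense s) :
    ∃ q : lp (fun _ : s => ℝ) 1 →L[ℝ] Z, Surjective q := by
  classical
  -- truncating to the unit ball keeps the family bounded; the points `v` used below have norm `< 1`
  let u : s → Z := fun v => if ‖(v : Z)‖ ≤ 1 then v else 0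
  have hu : ∀ v, ‖u v‖ ≤ 1 := fun v => by
    by_cases hv : ‖(v : Z)‖ ≤ 1 <;> simp [u, hv]
  refine ⟨lpOneLift ℝ u 1 hu, (lpOneLift ℝ u 1 hu).surjective_of_exists_approx_preimage
    (C := 2) fun z => ?_⟩
  rcases eq_or_ne z 0 with rfl | hz
  · exact ⟨0, by simp⟩
  have hz' : 0 < ‖z‖ := norm_pos_iff.mpr hz
  set w := (2 * ‖z‖)⁻¹ • z
  have hw : ‖w‖ = 1 / 2 := by
    rw [norm_smul, norm_inv, Real.norm_of_nonneg (by positivity)]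
    field_simp
  obtain ⟨v, hv, hwv⟩ := hs.exists_dist_lt w (by norm_num : (0 : ℝ) < 1 / 4)
  rw [dist_eq_norm] at hwv
  have huv : u ⟨v, hv⟩ = v := if_pos <| by
    linarith [norm_le_norm_add_norm_sub' v w, norm_sub_rev v w]
  refine ⟨lp.single 1 ⟨v, hv⟩ (2 * ‖z‖), ?_, ?_⟩
  · have hzv : z - (2 * ‖z‖) • v = (2 * ‖z‖) • (w - v) := by
      rw [smul_sub, smul_inv_smul₀ (by positivity)]
    rw [lpOneLift_single, huv, hzv, norm_smul, Real.norm_of_nonneg (by positivity)]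
    nlinarith
  · simp

theorem exists_dense_card_eq_dens (X : Type) [TopologicalSpace X] :
    ∃ s : Set X, Dense s ∧ #s = dens X :=
  csInf_mem (s := {c | ∃ s : Set X, Dense s ∧ #s = c}) ⟨_, Set.univ, dense_univ, rfl⟩

theorem stmt0_general
    (E : Type) [NormedAddCommGroup E] [NormedSpace ℝ E]
    (ℵ : Cardinal)
    (hext : ∀ (I : Type), #I < ℵ →
      ∀ (Y : Submodule ℝ (lp (fun _ : I => ℝ) 1)),
        IsClosed (Y : Set (lp (fun _ : I => ℝ) 1)) →
        ∀ t : Y →L[ℝ] E, ∃ T : (lp (fun _ : I => ℝ) 1) →L[ℝ] E, ∀ y : Y, T y = t y) :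
    ∀ (X : Type) [NormedAddCommGroup X] [NormedSpace ℝ X] [CompleteSpace X]
      (E' : Submodule ℝ X), IsClosed (E' : Set X) → Nonempty (E' ≃ₗᵢ[ℝ] E) →
      dens (X ⧸ E') < ℵ → Submodule.ClosedComplemented E' := by
  rintro X _ _ _ E' hE' ⟨e⟩ hdens
  have : IsClosed (E' : Set X) := hE'
  obtain ⟨s, hs, hs_card⟩ := exists_dense_card_eq_dens (X ⧸ E')
  obtain ⟨q, hq⟩ := exists_surjective_lp_one_of_dense hs
  obtain ⟨Q, hQ⟩ := E'.exists_mkQL_comp_eq_of_lp_one q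
  refine E'.closedComplemented_of_forall_exists_extend q hq Q hQ fun t => ?_
  obtain ⟨T, hT⟩ := hext s (hs_card ▸ hdens) q.ker q.isClosed_ker
    ((e.toContinuousLinearEquiv : E' →L[ℝ] E).comp t)
  exact ⟨(e.symm.toContinuousLinearEquiv : E →L[ℝ] E').comp T, fun y => by simp [hT]⟩

theorem stmt0
    (E : Type) [NormedAddCommGroup E] [NormedSpace ℝ E] [CompleteSpace E]
    (ℵ : Cardinal) (hℵ : Cardinal.aleph0 < ℵ)
    (hext : ∀ (I : Type), #I < ℵ →
      ∀ (Y : Submodule ℝ (lp (fun _ : I => ℝ) 1)),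
        IsClosed (Y : Set (lp (fun _ : I => ℝ) 1)) →
        ∀ t : Y →L[ℝ] E, ∃ T : (lp (fun _ : I => ℝ) 1) →L[ℝ] E, ∀ y : Y, T y = t y) :
    ∀ (X : Type) [NormedAddCommGroup X] [NormedSpace ℝ X] [CompleteSpace X]
      (E' : Submodule ℝ X), IsClosed (E' : Set X) → Nonempty (E' ≃ₗᵢ[ℝ] E) →
      dens (X ⧸ E') < ℵ → Submodule.ClosedComplemented E' :=
  stmt0_general E ℵ hext
end

section
/- Let E be a Banach space and ℵ an uncountable cardinal. If E is complemented in every Banach space X containing it with dens(X/E) < ℵ, then for every Banach space X, every closed subspace Y ⊆ X with dens(X/Y) < ℵ, and every bounded operator t : Y → E, there exists a bounded operator T : X → E extending t. -/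
open Cardinal

/-
Rescale `t` to a contraction and form the pushout `PO = (X ⊕₁ E) / {(y, -t y) | y ∈ Y}` of
`Y ⊆ X` and `t`. Since `‖t‖ ≤ 1`, the map `E → PO` is an isometric embedding, and
`PO / E` is a continuous linear image of `X / Y`, so `dens (PO / E) < ℵ`. Hence `E` is
complemented in `PO`, and the projection composed with `X → PO` extends `t`.
-/

theorem dens_le_of_surjective {A B : Type} [TopologicalSpace A] [TopologicalSpace B]
    {f : A → B} (hf : Continuous f) (hsurj : Function.Surjective f) :
    dens B ≤ dens A := by
  obtain ⟨s, hs, hcard⟩ := csInf_mem (s := {c | ∃ s : Set A, Dense s ∧ #s = c})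
    ⟨_, Set.univ, dense_univ, rfl⟩
  calc dens B ≤ #(f '' s) := csInf_le' ⟨f '' s, hsurj.denseRange.dense_image hf hs, rfl⟩
    _ ≤ #s := mk_image_le
    _ = dens A := hcard

namespace Pushout

variable {X E : Type*} [NormedAddCommGroup X] [NormedSpace ℝ X]
  [NormedAddCommGroup E] [NormedSpace ℝ E] {Y : Submodule ℝ X} (t : Y →L[ℝ] E)

local notation "ℓ¹" => WithLp 1 (X × E)

def negGraphMap : Y →L[ℝ] ℓ¹ :=
  (WithLp.prodContinuousLinearEquiv 1 ℝ X E).symm.toContinuousLinearMap ∘L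
    Y.subtypeL.prod (-t)

@[simp] lemma negGraphMap_apply (y : Y) : negGraphMap t y = WithLp.toLp 1 ((y : X), -t y) := rfl

lemma norm_negGraphMap (y : Y) : ‖negGraphMap t y‖ = ‖y‖ + ‖t y‖ := by
  simp [WithLp.prod_norm_eq_of_L1]

def negGraph : Submodule ℝ ℓ¹ := LinearMap.range (negGraphMap t : Y →ₗ[ℝ] ℓ¹)

instance isClosed_negGraph [CompleteSpace Y] : IsClosed (negGraph t : Set ℓ¹) := by
  have hanti : AntilipschitzWith 1 (negGraphMap t) :=
    (negGraphMap t).antilipschitz_of_bound fun y => by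
      rw [NNReal.coe_one, one_mul, norm_negGraphMap]
      exact le_add_of_nonneg_right (norm_nonneg _)
  exact hanti.isClosed_range (negGraphMap t).uniformContinuous

/-- The pushout of the inclusion `Y ⊆ X` and `t`. -/
abbrev _root_.Pushout : Type _ := ℓ¹ ⧸ negGraph t

def inl : X →L[ℝ] Pushout t :=
  (negGraph t).mkQL ∘L
    (WithLp.prodContinuousLinearEquiv 1 ℝ X E).symm.toContinuousLinearMap ∘L .inl ℝ X E

def inr : E →L[ℝ] Pushout t :=
  (negGraph t).mkQL ∘L
    (WithLp.prodContinuousLinearEquiv 1 ℝ X E).symm.toContinuousLinearMap ∘L .inr ℝ X E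

lemma inl_apply (x : X) : inl t x = Submodule.Quotient.mk (WithLp.toLp 1 (x, 0)) := rfl

lemma inr_apply (e : E) : inr t e = Submodule.Quotient.mk (WithLp.toLp 1 (0, e)) := rfl

lemma inl_coe (y : Y) : inl t y = inr t (t y) := by
  rw [inl_apply, inr_apply, Submodule.Quotient.eq]
  exact ⟨y, by simp [← WithLp.toLp_sub]⟩

lemma inl_add_inr_surjective (z : Pushout t) : ∃ x e, inl t x + inr t e = z := by
  obtain ⟨p, rfl⟩ := Submodule.Quotient.mk_surjective _ z
  refine ⟨p.fst, p.snd, ?_⟩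
  simp only [inl_apply, inr_apply, ← Submodule.Quotient.mk_add, ← WithLp.toLp_add,
    Prod.mk_add_mk, add_zero, zero_add]
  rfl

lemma norm_inr (ht : ‖t‖ ≤ 1) (e : E) : ‖inr t e‖ = ‖e‖ := by
  refine le_antisymm
    ((Submodule.Quotient.norm_mk_le _ _).trans_eq (WithLp.norm_toLp_snd 1 X E e)) ?_
  refine QuotientAddGroup.le_norm_iff.2 fun p hp => ?_
  obtain ⟨y, hy⟩ : p - WithLp.toLp 1 (0, e) ∈ negGraph t := (Submodule.Quotient.eq _).1 hp
  have hp' : p = WithLp.toLp 1 ((y : X), e - t y) := by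
    rw [← sub_add_cancel p (WithLp.toLp 1 (0, e)), ← hy]
    simp [← WithLp.toLp_add, sub_eq_neg_add]
  calc ‖e‖ ≤ ‖t y‖ + ‖e - t y‖ := norm_le_norm_add_norm_sub' e (t y)
    _ ≤ ‖y‖ + ‖e - t y‖ := by gcongr; exact t.le_of_opNorm_le ht y |>.trans_eq (one_mul _)
    _ = ‖p‖ := by simp [hp', WithLp.prod_norm_eq_of_L1]

def inrₗᵢ (ht : ‖t‖ ≤ 1) : E →ₗᵢ[ℝ] Pushout t := ⟨inr t, norm_inr t ht⟩

local notation "E'" => LinearMap.range (inr t : E →ₗ[ℝ] Pushout t)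

lemma isClosed_range_inr [CompleteSpace Y] [CompleteSpace E] (ht : ‖t‖ ≤ 1) :
    IsClosed (E' : Set (Pushout t)) :=
  (inrₗᵢ t ht).isometry.isClosedEmbedding.isClosed_range

def inlQuotient : X ⧸ Y →L[ℝ] Pushout t ⧸ E' :=
  Y.liftQL ((E').mkQL ∘L inl t) fun y hy => by
    simp [inl_coe t ⟨y, hy⟩]

lemma inlQuotient_surjective : Function.Surjective (inlQuotient t) := by
  intro w
  obtain ⟨z, rfl⟩ := Submodule.Quotient.mk_surjective _ w
  obtain ⟨x, e, rfl⟩ := inl_add_inr_surjective t z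
  refine ⟨Submodule.Quotient.mk x, ?_⟩
  have he : (Submodule.Quotient.mk (inr t e) : Pushout t ⧸ E') = 0 :=
    (Submodule.Quotient.mk_eq_zero _).2 ⟨e, rfl⟩
  rw [Submodule.Quotient.mk_add, he, add_zero]
  rfl

theorem exists_extension_of_closedComplemented (ht : ‖t‖ ≤ 1) (h : (E').ClosedComplemented) :
    ∃ T : X →L[ℝ] E, ∀ y : Y, T y = t y := by
  obtain ⟨f, hf⟩ := h
  refine ⟨(inrₗᵢ t ht).equivRange.symm.toContinuousLinearEquiv.toContinuousLinearMap ∘L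
    f ∘L inl t, fun y => ?_⟩
  have : f (inr t (t y)) = (inrₗᵢ t ht).equivRange (t y) :=
    hf ⟨_, LinearMap.mem_range_self _ _⟩
  change (inrₗᵢ t ht).equivRange.symm (f (inl t y)) = t y
  rw [inl_coe, this, LinearIsometryEquiv.symm_apply_apply]

end Pushout

theorem stmt1_general
    (E : Type) [NormedAddCommGroup E] [NormedSpace ℝ E] [CompleteSpace E]
    (ℵ : Cardinal)
    (hcompl : ∀ (X : Type) [NormedAddCommGroup X] [NormedSpace ℝ X] [CompleteSpace X]
      (E' : Submodule ℝ X), IsClosed (E' : Set X) → Nonempty (E' ≃ₗᵢ[ℝ] E) →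
      dens (X ⧸ E') < ℵ → Submodule.ClosedComplemented E') :
    ∀ (X : Type) [NormedAddCommGroup X] [NormedSpace ℝ X] [CompleteSpace X]
      (Y : Submodule ℝ X), IsClosed (Y : Set X) → dens (X ⧸ Y) < ℵ →
      ∀ t : Y →L[ℝ] E, ∃ T : X →L[ℝ] E, ∀ y : Y, T y = t y := by
  intro X _ _ _ Y hY hdens t
  have : CompleteSpace Y := hY.completeSpace_coe
  set c : ℝ := ‖t‖ + 1
  have hc : 0 < c := by positivity
  set t₁ : Y →L[ℝ] E := c⁻¹ • t
  have ht₁ : ‖t₁‖ ≤ 1 := calc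
    ‖t₁‖ ≤ ‖c⁻¹‖ * ‖t‖ := t.opNorm_smul_le c⁻¹
    _ ≤ 1 := by
      rw [norm_inv, Real.norm_of_nonneg hc.le, inv_mul_le_one₀ hc]
      linarith
  have hdens₁ :
      dens (Pushout t₁ ⧸ LinearMap.range (Pushout.inr t₁ : E →ₗ[ℝ] Pushout t₁)) < ℵ :=
    (dens_le_of_surjective (Pushout.inlQuotient t₁).continuous
      (Pushout.inlQuotient_surjective t₁)).trans_lt hdens
  obtain ⟨T, hT⟩ := Pushout.exists_extension_of_closedComplemented t₁ ht₁ <|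
    hcompl _ _ (Pushout.isClosed_range_inr t₁ ht₁)
      ⟨(Pushout.inrₗᵢ t₁ ht₁).equivRange.symm⟩ hdens₁
  refine ⟨c • T, fun y => ?_⟩
  rw [smul_apply, hT, smul_apply, smul_inv_smul₀ hc.ne']

theorem stmt1
    (E : Type) [NormedAddCommGroup E] [NormedSpace ℝ E] [CompleteSpace E]
    (ℵ : Cardinal) (hℵ : Cardinal.aleph0 < ℵ)
    (hcompl : ∀ (X : Type) [NormedAddCommGroup X] [NormedSpace ℝ X] [CompleteSpace X]
      (E' : Submodule ℝ X), IsClosed (E' : Set X) → Nonempty (E' ≃ₗᵢ[ℝ] E) →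
      dens (X ⧸ E') < ℵ → Submodule.ClosedComplemented E') :
    ∀ (X : Type) [NormedAddCommGroup X] [NormedSpace ℝ X] [CompleteSpace X]
      (Y : Submodule ℝ X), IsClosed (Y : Set X) → dens (X ⧸ Y) < ℵ →
      ∀ t : Y →L[ℝ] E, ∃ T : X →L[ℝ] E, ∀ y : Y, T y = t y :=
  stmt1_general E ℵ hcompl
end

section
/- For every infinite cardinal ℵ, the Banach space ℓ₁(2^ℵ) embeds isometrically into ℓ_∞(ℵ). -/
/-!
A family `A` of subsets of `α` is independent if every finite Boolean combination of its members
is nonempty. By Hausdorff's construction, an infinite set `α` carries an independent family of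
`2 ^ #α` subsets: take for points the pairs `(F, 𝒜)` of a finite `F ⊆ α` and a finite family
`𝒜` of subsets of `F`, and let `X ⊆ α` correspond to the set of pairs with `F ∩ X ∈ 𝒜`.

The `±1`-valued indicators `ε i` of an independent family `A i` give an operator
`f ↦ (x ↦ ∑' i, ε i x * f i)` from `ℓ¹` to `ℓ^∞` of norm at most one. On a finitely supported
`f`, independence provides a point `x` where `ε i x` is the sign of `f i` on the support, so the
operator preserves the norm there; by density it is an isometry.
-/

open Cardinal Set Function Filter Topology
open scoped ENNReal lp

def IsIndependentFamily {ι α : Type*} (A : ι → Set α) : Prop :=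
  ∀ (S : Finset ι) (T : Set ι), ∃ x, ∀ i ∈ S, (x ∈ A i ↔ i ∈ T)

namespace IsIndependentFamily

variable {ι ι' α β : Type*} {A : ι → Set α}

theorem comp (hA : IsIndependentFamily A) {f : ι' → ι} (hf : Injective f) :
    IsIndependentFamily (A ∘ f) := by
  intro S T
  obtain ⟨x, hx⟩ := hA (S.map ⟨f, hf⟩) (f '' T)
  exact ⟨x, fun i hi => (hx (f i) (Finset.mem_map_of_mem _ hi)).trans hf.mem_set_image⟩

theorem preimage (hA : IsIndependentFamily A) {g : β → α} (hg : Surjective g) :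
    IsIndependentFamily fun i => g ⁻¹' A i := by
  intro S T
  obtain ⟨x, hx⟩ := hA S T
  obtain ⟨y, rfl⟩ := hg x
  exact ⟨y, hx⟩

end IsIndependentFamily

theorem exists_finset_injOn_inter {α : Type*} (S : Finset (Set α)) :
    ∃ F : Finset α, InjOn (fun X : Set α => (F : Set α) ∩ X) (S : Set (Set α)) := by
  classical
  have (p : Set α × Set α) : ∃ G : Finset α, ↑G ∩ p.1 = ↑G ∩ p.2 → p.1 = p.2 := by
    by_cases h : p.1 = p.2
    · exact ⟨∅, fun _ => h⟩
    · obtain ⟨x, hx⟩ := not_forall.1 (mt Set.ext h)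
      refine ⟨{x}, fun hG => absurd ?_ hx⟩
      simpa using congrArg (x ∈ ·) hG
  choose G hG using this
  refine ⟨(S ×ˢ S).biUnion G, fun X hX Y hY hXY => hG (X, Y) ?_⟩
  have hsub : (G (X, Y) : Set α) ⊆ ↑((S ×ˢ S).biUnion G) :=
    Finset.coe_subset.2 (Finset.subset_biUnion_of_mem G (Finset.mk_mem_product hX hY))
  simp only at hXY
  rw [← inter_eq_left.2 hsub, inter_assoc, inter_assoc, hXY]

def hausdorffFamily (α : Type*) (X : Set α) : Set (Finset α × Finset (Finset α)) :=
  {p | ∃ B ∈ p.2, (B : Set α) = ↑p.1 ∩ X}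

theorem isIndependentFamily_hausdorffFamily (α : Type*) :
    IsIndependentFamily (hausdorffFamily α) := by
  classical
  intro S T
  obtain ⟨F, hF⟩ := exists_finset_injOn_inter S
  have hcoe (X : Set α) : ((F.filter (· ∈ X) : Finset α) : Set α) = ↑F ∩ X := by
    rw [Finset.coe_filter]; rfl
  refine ⟨(F, (S.filter (· ∈ T)).image fun X => F.filter (· ∈ X)), fun X hX => ?_⟩
  simp only [hausdorffFamily, mem_ofPred_eq, Finset.mem_image, Finset.mem_filter]
  constructor
  · rintro ⟨_, ⟨Y, ⟨hY, hYT⟩, rfl⟩, hYX⟩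
    rwa [← hF hY hX (by simp only [← hYX, hcoe])]
  · exact fun hXT => ⟨_, ⟨X, ⟨hX, hXT⟩, rfl⟩, hcoe X⟩

theorem exists_isIndependentFamily_of_infinite (α : Type*) [Infinite α] :
    ∃ A : Set α → Set α, IsIndependentFamily A := by
  obtain ⟨e⟩ : Nonempty (α ≃ Finset α × Finset (Finset α)) := by
    rw [← Cardinal.eq, mk_prod, lift_id, mk_finset_of_infinite, mk_finset_of_infinite,
      mk_finset_of_infinite, lift_id, mul_eq_self (aleph0_le_mk α)]
  exact ⟨_, (isIndependentFamily_hausdorffFamily α).preimage e.surjective⟩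

namespace lp

variable {ι α : Type*}

theorem summable_norm_of_one_s4 (f : ℓ¹(ι, ℝ)) : Summable fun i => ‖f i‖ := by
  simpa using (lp.memℓp f).summable (by norm_num)

theorem tsum_norm_of_one (f : ℓ¹(ι, ℝ)) : ∑' i, ‖f i‖ = ‖f‖ := by
  simpa using (lp.norm_eq_tsum_rpow (by norm_num) f).symm

theorem summable_mul_of_abs_le_one {g : ι → ℝ} (hg : ∀ i, |g i| ≤ 1) (f : ℓ¹(ι, ℝ)) :
    Summable fun i => g i * f i :=
  .of_norm_bounded (summable_norm_of_one_s4 f) fun i => by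
    simpa [abs_mul] using mul_le_of_le_one_left (abs_nonneg (f i)) (hg i)

theorem abs_tsum_mul_le_norm {g : ι → ℝ} (hg : ∀ i, |g i| ≤ 1) (f : ℓ¹(ι, ℝ)) :
    |∑' i, g i * f i| ≤ ‖f‖ := by
  rw [← tsum_norm_of_one]
  refine (norm_tsum_le_tsum_norm (summable_mul_of_abs_le_one hg f).norm).trans ?_
  refine (summable_mul_of_abs_le_one hg f).norm.tsum_le_tsum (fun i => ?_)
    (summable_norm_of_one_s4 f)
  simpa [abs_mul] using mul_le_of_le_one_left (abs_nonneg (f i)) (hg i)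

variable (ε : ι → α → ℝ) (hε : ∀ i x, |ε i x| ≤ 1)

noncomputable def matrixCLM : ℓ¹(ι, ℝ) →L[ℝ] ℓ^∞(α, ℝ) :=
  LinearMap.mkContinuous
    { toFun f := ⟨fun x => ∑' i, ε i x * f i, memℓp_infty ⟨‖f‖, by
        rintro _ ⟨x, rfl⟩; exact abs_tsum_mul_le_norm (hε · x) f⟩⟩
      map_add' f g := by
        ext x
        simp only [coeFn_add, Pi.add_apply, mul_add]
        exact (summable_mul_of_abs_le_one (hε · x) f).tsum_add
          (summable_mul_of_abs_le_one (hε · x) g)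
      map_smul' c f := by
        ext x
        simp only [coeFn_smul, Pi.smul_apply, smul_eq_mul, mul_left_comm _ c, tsum_mul_left]
        rfl }
    1 fun f => by
      rw [one_mul]
      exact norm_le_of_forall_le (norm_nonneg f) fun x => abs_tsum_mul_le_norm (hε · x) f

theorem matrixCLM_apply (f : ℓ¹(ι, ℝ)) (x : α) :
    matrixCLM ε hε f x = ∑' i, ε i x * f i :=
  rfl

theorem norm_matrixCLM_apply_le (f : ℓ¹(ι, ℝ)) : ‖matrixCLM ε hε f‖ ≤ ‖f‖ := by
  simpa using (matrixCLM ε hε).le_of_opNorm_le (LinearMap.mkContinuous_norm_le _ zero_le_one _) f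

theorem matrixCLM_sum_single [DecidableEq ι] (S : Finset ι) (c : ι → ℝ) (x : α) :
    matrixCLM ε hε (∑ i ∈ S, lp.single 1 i (c i)) x = ∑ i ∈ S, ε i x * c i := by
  rw [map_sum, coeFn_sum, Finset.sum_apply]
  refine Finset.sum_congr rfl fun i _ => ?_
  rw [matrixCLM_apply, tsum_eq_single i fun k hk => by rw [lp.single_apply_ne _ _ _ hk, mul_zero],
    lp.single_apply_self]

theorem norm_matrixCLM_apply
    (hsign : ∀ (S : Finset ι) (c : ι → ℝ), ∃ x, ∀ i ∈ S, ε i x * c i = |c i|) (f : ℓ¹(ι, ℝ)) :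
    ‖matrixCLM ε hε f‖ = ‖f‖ := by
  classical
  refine (norm_matrixCLM_apply_le ε hε f).antisymm ?_
  have hf := lp.hasSum_single ENNReal.one_ne_top f
  refine le_of_tendsto_of_tendsto' ((continuous_norm.tendsto f).comp hf)
    (((matrixCLM ε hε).continuous.norm.tendsto f).comp hf) fun S => ?_
  obtain ⟨x, hx⟩ := hsign S f
  set y := ∑ i ∈ S, lp.single 1 i (f i)
  calc ‖y‖ = ∑ i ∈ S, |f i| := by simpa using lp.norm_sum_single (p := 1) (by norm_num) f S
    _ = matrixCLM ε hε y x := by rw [matrixCLM_sum_single]; exact (Finset.sum_congr rfl hx).symm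
    _ ≤ ‖matrixCLM ε hε y‖ :=
        (le_abs_self _).trans (by
          simpa using norm_apply_le_norm ENNReal.top_ne_zero (matrixCLM ε hε y) x)

end lp

theorem IsIndependentFamily.nonempty_linearIsometry_lp {ι α : Type*} {A : ι → Set α}
    (hA : IsIndependentFamily A) : Nonempty (ℓ¹(ι, ℝ) →ₗᵢ[ℝ] ℓ^∞(α, ℝ)) := by
  classical
  let ε i x : ℝ := if x ∈ A i then 1 else -1
  have hε i x : |ε i x| ≤ 1 := by unfold ε; split_ifs <;> simp
  have hsign (S : Finset ι) (c : ι → ℝ) : ∃ x, ∀ i ∈ S, ε i x * c i = |c i| := by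
    obtain ⟨x, hx⟩ := hA S {i | 0 ≤ c i}
    refine ⟨x, fun i hi => ?_⟩
    by_cases hc : 0 ≤ c i
    · simp [ε, (hx i hi).2 hc, abs_of_nonneg hc]
    · simp [ε, mt (hx i hi).1 hc, abs_of_neg (not_le.1 hc)]
  exact ⟨⟨(lp.matrixCLM ε hε).toLinearMap, lp.norm_matrixCLM_apply ε hε hsign⟩⟩

theorem stmt4
    (ℵ : Cardinal) (hℵ : Cardinal.aleph0 ≤ ℵ)
    (I J : Type) (hI : #I = ℵ) (hJ : #J = 2 ^ ℵ) :
    Nonempty ((lp (fun _ : J => ℝ) 1) →ₗᵢ[ℝ] (lp (fun _ : I => ℝ) ⊤)) := by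
  have : Infinite I := by rw [infinite_iff, hI]; exact hℵ
  obtain ⟨A, hA⟩ := exists_isIndependentFamily_of_infinite I
  obtain ⟨e⟩ : Nonempty (J ≃ Set I) := by rw [← Cardinal.eq, mk_set, hI, hJ]
  exact (hA.comp e.injective).nonempty_linearIsometry_lp
end

section
/- Let ℵ be an infinite cardinal, I a set of cardinality ℵ, and Y a closed subspace of ℓ_∞(I) with density character at most ℵ. Then there exists a closed subspace Z of ℓ_∞(I) isomorphic to c₀(I) such that Y ∩ Z = {0} and Y + Z is closed. -/
open Cardinal
open scoped NNReal ENNReal lp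

/-- `c₀(I)`: the closed span in `ℓ_∞(I)` of the characteristic functions of singletons. -/
noncomputable def czero (I : Type) [DecidableEq I] : Submodule ℝ (lp (fun _ : I => ℝ) ⊤) :=
  (Submodule.span ℝ {f : lp (fun _ : I => ℝ) ⊤ | ∃ i : I, f = lp.single (E := fun _ : I => ℝ) ⊤ i 1}).topologicalClosure

/-!
Identify `I` with `I × I × Bool` and let `(u j)_{j ∈ I}` be dense in `Y`. For each pair `(i, j)`,
let `t` be the one of the two coordinates `(i, j, b)` where `|u j|` is smaller and `f` the other;
the isometry `Φ` of `ℓ_∞(I)` copies `h i` to every such `t` and vanishes elsewhere. For `w ∈ Y`,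
reading `Φ h - w` at `t` and at `f` gives
`|h i| ≤ ‖Φ h - w‖ + |u j t| + ‖u j - w‖ ≤ ‖Φ h - w‖ + |u j f| + ‖u j - w‖ ≤ 2 ‖Φ h - w‖ + 2 ‖u j - w‖`,
hence `‖h‖ ≤ 2 ‖Φ h - w‖` by density. So `Φ` followed by the quotient map onto `ℓ_∞(I) ⧸ Y` is
bounded below: `Z = Φ (c₀(I))` meets `Y` only in `0`, and `Y + Z` is the preimage of the closed
image of `Z`.
-/

theorem Cardinal.mk_prod_prod_bool {I : Type*} [Infinite I] : #(I × I × Bool) = #I := by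
  have h2 : (2 : Cardinal) ≤ #I := (natCast_lt_aleph0 (n := 2)).le.trans (aleph0_le_mk I)
  simp only [mk_prod, lift_id, lift_uzero, mk_bool, lift_ofNat]
  rw [mul_eq_left (aleph0_le_mk I) h2 two_ne_zero, mul_eq_self (aleph0_le_mk I)]

theorem exists_denseRange_of_dens_le {X J : Type} [TopologicalSpace X] [Nonempty X]
    (h : dens X ≤ #J) : ∃ u : J → X, DenseRange u := by
  obtain ⟨s, hs, hsc⟩ : dens X ∈ {c | ∃ s : Set X, Dense s ∧ #s = c} :=
    csInf_mem ⟨_, Set.univ, dense_univ, rfl⟩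
  have : Nonempty s := hs.nonempty.to_subtype
  obtain ⟨f⟩ := (le_def s J).mp (hsc.trans_le h)
  refine ⟨Subtype.val ∘ Function.invFun f, ?_⟩
  rwa [DenseRange, Set.range_comp, (Function.invFun_surjective f.injective).range_eq,
    Set.image_univ, Subtype.range_coe]

section ClosedSum

variable {E F : Type*} [NormedAddCommGroup E] [NormedSpace ℝ E]
  [NormedAddCommGroup F] [NormedSpace ℝ F] [CompleteSpace F]

theorem Submodule.norm_mkQ (Y : Submodule ℝ E) (x : E) : ‖Y.mkQ x‖ = Metric.infDist x Y :=
  QuotientAddGroup.norm_mk x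

theorem Submodule.isClosed_sup_range_of_norm_le {Y : Submodule ℝ E} (hY : IsClosed (Y : Set E))
    (T : F →L[ℝ] E) {K : ℝ≥0} (hT : ∀ x, ∀ y ∈ Y, ‖x‖ ≤ K * ‖T x - y‖) :
    IsClosed ((Y ⊔ LinearMap.range (T : F →ₗ[ℝ] E) : Submodule ℝ E) : Set E) := by
  -- makes `E ⧸ Y` a normed space, which `AntilipschitzWith.isClosed_range` needs
  have := hY
  have hanti : AntilipschitzWith K (Y.mkQL ∘L T) :=
    AddMonoidHomClass.antilipschitz_of_bound _ fun x => by
      rw [ContinuousLinearMap.comp_apply, Submodule.mkQL_apply, Submodule.norm_mkQ,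
        Metric.infDist_eq_iInf, Real.mul_iInf_of_nonneg K.coe_nonneg]
      exact le_ciInf fun ⟨y, hy⟩ => by simpa [dist_eq_norm] using hT x y hy
  rw [← Submodule.comap_map_mkQ, ← LinearMap.range_comp]
  exact (hanti.isClosed_range (Y.mkQL ∘L T).uniformContinuous).preimage Y.mkQL.continuous

theorem Submodule.exists_isClosed_sup_copy_of_norm_le {Y : Submodule ℝ E}
    (hY : IsClosed (Y : Set E)) (T : F →ₗᵢ[ℝ] E) {K : ℝ≥0}
    (hT : ∀ x, ∀ y ∈ Y, ‖x‖ ≤ K * ‖T x - y‖) :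
    ∃ Z : Submodule ℝ E, IsClosed (Z : Set E) ∧ Nonempty (Z ≃L[ℝ] F) ∧ Y ⊓ Z = ⊥ ∧
      IsClosed ((Y ⊔ Z : Submodule ℝ E) : Set E) := by
  refine ⟨T.range, ?_, ⟨T.equivRange.toContinuousLinearEquiv.symm⟩, ?_,
    isClosed_sup_range_of_norm_le hY T.toContinuousLinearMap hT⟩
  · exact T.isometry.isClosedEmbedding.isClosed_range
  · rw [Submodule.eq_bot_iff]
    rintro _ ⟨hy, x, rfl⟩
    have hx : x = 0 := by simpa using hT x (T x) hy
    simp [hx]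

end ClosedSum

namespace lp

variable {I J X : Type*}

noncomputable def slotCopy (e : X ≃ I × J × Bool) (s : I → J → Bool) (h : I → ℝ) : X → ℝ :=
  {x | (e x).2.2 = s (e x).1 (e x).2.1}.indicator fun x => h (e x).1

section slotCopy

variable (e : X ≃ I × J × Bool) (s : I → J → Bool)

@[simp]
theorem slotCopy_symm_apply_self (h : I → ℝ) (i : I) (j : J) :
    slotCopy e s h (e.symm (i, j, s i j)) = h i := by
  simp [slotCopy]

@[simp]
theorem slotCopy_symm_apply_not (h : I → ℝ) (i : I) (j : J) :
    slotCopy e s h (e.symm (i, j, !s i j)) = 0 := by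
  simp [slotCopy]

theorem norm_slotCopy_apply_le (h : ℓ^∞(I, ℝ)) (x : X) : ‖slotCopy e s h x‖ ≤ ‖h‖ :=
  (norm_indicator_le_norm_self _ x).trans (norm_apply_le_norm ENNReal.top_ne_zero h _)

theorem memℓp_slotCopy (h : ℓ^∞(I, ℝ)) : Memℓp (slotCopy e s h) ∞ :=
  memℓp_infty ⟨‖h‖, Set.forall_mem_range.2 (norm_slotCopy_apply_le e s h)⟩

noncomputable def slotEmbedding [Nonempty J] : ℓ^∞(I, ℝ) →ₗᵢ[ℝ] ℓ^∞(X, ℝ) where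
  toFun h := ⟨slotCopy e s h, memℓp_slotCopy e s h⟩
  map_add' h g := lp.ext <| funext fun x => by
    simp only [slotCopy, coeFn_add, Pi.add_apply, Set.indicator_add]
  map_smul' c h := lp.ext <| funext fun x => by
    simp only [slotCopy, coeFn_smul, Pi.smul_apply, Set.indicator_smul_apply, RingHom.id_apply]
  norm_map' h := by
    refine le_antisymm (norm_le_of_forall_le (norm_nonneg h) (norm_slotCopy_apply_le e s h))
      (norm_le_of_forall_le (norm_nonneg _) fun i => ?_)
    obtain ⟨j⟩ := ‹Nonempty J›
    simpa using norm_apply_le_norm ENNReal.top_ne_zero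
      (⟨slotCopy e s h, memℓp_slotCopy e s h⟩ : ℓ^∞(X, ℝ)) (e.symm (i, j, s i j))

end slotCopy

noncomputable def smallerSlot (e : X ≃ I × J × Bool) (u : J → X → ℝ) (i : I) (j : J) : Bool :=
  decide (‖u j (e.symm (i, j, true))‖ < ‖u j (e.symm (i, j, false))‖)

theorem norm_apply_smallerSlot_le (e : X ≃ I × J × Bool) (u : J → X → ℝ) (i : I) (j : J) :
    ‖u j (e.symm (i, j, smallerSlot e u i j))‖ ≤ ‖u j (e.symm (i, j, !smallerSlot e u i j))‖ := by
  by_cases h : ‖u j (e.symm (i, j, true))‖ < ‖u j (e.symm (i, j, false))‖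
  · rw [smallerSlot, decide_eq_true h]
    exact h.le
  · rw [smallerSlot, decide_eq_false h]
    exact not_lt.mp h

theorem norm_apply_le_slotEmbedding_smallerSlot [Nonempty J] (e : X ≃ I × J × Bool)
    (u : J → ℓ^∞(X, ℝ)) (h : ℓ^∞(I, ℝ)) (w : ℓ^∞(X, ℝ)) (i : I) (j : J) :
    ‖h i‖ ≤ 2 * ‖slotEmbedding e (smallerSlot e fun j => u j) h - w‖ + 2 * ‖u j - w‖ := by
  set s := smallerSlot e fun j => u j
  set Φh := slotEmbedding e s h
  set t := e.symm (i, j, s i j)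
  set f := e.symm (i, j, !s i j)
  have hΦt : Φh t = h i := slotCopy_symm_apply_self e s h i j
  have hΦf : Φh f = 0 := slotCopy_symm_apply_not e s h i j
  have h₁ := norm_apply_le_norm ENNReal.top_ne_zero (Φh - w) t
  have h₂ := norm_apply_le_norm ENNReal.top_ne_zero (Φh - w) f
  have h₃ := norm_apply_le_norm ENNReal.top_ne_zero (u j - w) t
  have h₄ := norm_apply_le_norm ENNReal.top_ne_zero (u j - w) f
  have h₅ : ‖u j t‖ ≤ ‖u j f‖ := norm_apply_smallerSlot_le e (fun j => u j) i j
  rw [coeFn_sub, Pi.sub_apply] at h₁ h₂ h₃ h₄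
  rw [hΦt] at h₁
  rw [hΦf, zero_sub] at h₂
  linarith [norm_sub_norm_le (h i) (w t), norm_sub_norm_le (w t) (u j t),
    norm_sub_rev (w t) (u j t), norm_sub_norm_le (u j f) (w f), _root_.norm_neg (w f)]

theorem norm_le_two_mul_norm_slotEmbedding_sub [Nonempty J] (e : X ≃ I × J × Bool)
    (u : J → ℓ^∞(X, ℝ)) (h : ℓ^∞(I, ℝ)) {w : ℓ^∞(X, ℝ)} (hw : w ∈ closure (Set.range u)) :
    ‖h‖ ≤ 2 * ‖slotEmbedding e (smallerSlot e fun j => u j) h - w‖ := by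
  refine norm_le_of_forall_le (by positivity) fun i => le_of_forall_pos_le_add fun ε hε => ?_
  obtain ⟨j, hj⟩ := Metric.mem_closure_range_iff.mp hw (ε / 2) (half_pos hε)
  rw [dist_eq_norm, norm_sub_rev] at hj
  linarith [norm_apply_le_slotEmbedding_smallerSlot e u h w i j]

end lp

theorem stmt6
    (ℵ : Cardinal) (hℵ : Cardinal.aleph0 ≤ ℵ)
    (I : Type) [DecidableEq I] (hI : #I = ℵ)
    (Y : Submodule ℝ (lp (fun _ : I => ℝ) ⊤))
    (hYc : IsClosed (Y : Set (lp (fun _ : I => ℝ) ⊤)))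
    (hYd : dens Y ≤ ℵ) :
    ∃ Z : Submodule ℝ (lp (fun _ : I => ℝ) ⊤),
      IsClosed (Z : Set (lp (fun _ : I => ℝ) ⊤)) ∧
      Nonempty (Z ≃L[ℝ] czero I) ∧
      Y ⊓ Z = ⊥ ∧
      IsClosed ((Y ⊔ Z : Submodule ℝ (lp (fun _ : I => ℝ) ⊤)) : Set (lp (fun _ : I => ℝ) ⊤)) := by
  subst hI
  have : Infinite I := infinite_iff.mpr hℵ
  obtain ⟨e⟩ : Nonempty (I ≃ I × I × Bool) := Cardinal.eq.mp mk_prod_prod_bool.symm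
  obtain ⟨u, hu⟩ := exists_denseRange_of_dens_le hYd
  have hYu : (Y : Set ℓ^∞(I, ℝ)) ⊆ closure (Set.range fun i => (u i : ℓ^∞(I, ℝ))) := by
    rw [Set.range_comp']
    exact Subtype.dense_iff.mp hu
  have : CompleteSpace (czero I) := (Submodule.isClosed_topologicalClosure _).completeSpace_coe
  let Φ := lp.slotEmbedding e (lp.smallerSlot e fun i => u i)
  refine Submodule.exists_isClosed_sup_copy_of_norm_le hYc (Φ.comp (czero I).subtypeₗᵢ) (K := 2)
    fun h y hy => ?_
  exact_mod_cast lp.norm_le_two_mul_norm_slotEmbedding_sub e _ h (hYu hy)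
end

section
/- In ℓ_∞(S) (for any set S), every family of mutually intersecting closed balls has nonempty intersection; in particular two closed balls B(x,r) and B(y,s) intersect if and only if ‖x − y‖ ≤ r + s. -/
/-!
A family of pairwise intersecting intervals `[c i - r i, c i + r i]` of `ℝ` has the supremum of
its left endpoints as a common point. In `ℓ_∞(S)` a closed ball is a product of such intervals,
one per coordinate, so the coordinatewise supremum of the left endpoints lies in every ball of a
pairwise intersecting family. Two balls `B(x, r)` and `B(y, s)` with `‖x - y‖ ≤ r + s` meet at the
point of the segment `[x, y]` dividing it in the ratio `r : s`, in any real normed space.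
-/

open Metric

theorem closedBall_inter_closedBall_nonempty_iff {V P : Type*} [SeminormedAddCommGroup V]
    [NormedSpace ℝ V] [PseudoMetricSpace P] [NormedAddTorsor V P] {x y : P} {r s : ℝ}
    (hr : 0 ≤ r) (hs : 0 ≤ s) :
    (closedBall x r ∩ closedBall y s).Nonempty ↔ dist x y ≤ r + s := by
  refine ⟨dist_le_add_of_nonempty_closedBall_inter_closedBall, fun h => ?_⟩
  set c := r / (r + s)
  have hcr : c * (r + s) = r := div_mul_cancel_of_imp fun _ => by linarith
  have hc0 : 0 ≤ c := div_nonneg hr (add_nonneg hr hs)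
  have hc1 : c ≤ 1 := div_le_one_of_le₀ (le_add_of_nonneg_right hs) (add_nonneg hr hs)
  refine ⟨AffineMap.lineMap x y c, ?_, ?_⟩
  · rw [mem_closedBall, dist_lineMap_left, Real.norm_of_nonneg hc0]
    nlinarith
  · rw [mem_closedBall, dist_lineMap_right, Real.norm_of_nonneg (sub_nonneg.2 hc1)]
    nlinarith

theorem abs_ciSup_sub_sub_le {ι : Type*} [Nonempty ι] {c r : ι → ℝ}
    (h : ∀ i j, c i - r i ≤ c j + r j) (j : ι) : |(⨆ i, c i - r i) - c j| ≤ r j := by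
  have hbdd : BddAbove (Set.range fun i => c i - r i) :=
    ⟨c j + r j, by rintro _ ⟨i, rfl⟩; exact h i j⟩
  rw [abs_sub_le_iff]
  constructor
  · linarith [ciSup_le fun i => h i j]
  · linarith [le_ciSup hbdd j]

namespace lp

variable {α : Type*}

theorem mem_closedBall_infty_iff {x z : lp (fun _ : α => ℝ) ⊤} {r : ℝ} (hr : 0 ≤ r) :
    z ∈ closedBall x r ↔ ∀ a, |z a - x a| ≤ r := by
  rw [mem_closedBall, dist_eq_norm]
  exact ⟨fun h a => (norm_apply_le_norm ENNReal.top_ne_zero (z - x) a).trans h,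
    fun h => norm_le_of_forall_le hr h⟩

theorem memℓp_infty_of_abs_sub_le {f : α → ℝ} (x : lp (fun _ : α => ℝ) ⊤) {r : ℝ}
    (h : ∀ a, |f a - x a| ≤ r) : Memℓp f ⊤ := by
  have hfx : Memℓp (f - ⇑x) ⊤ := memℓp_infty ⟨r, by rintro _ ⟨a, rfl⟩; exact h a⟩
  simpa using hfx.add x.2

theorem iInter_closedBall_infty_nonempty {ι : Type*} (x : ι → lp (fun _ : α => ℝ) ⊤)
    (r : ι → ℝ) (h : ∀ i j, (closedBall (x i) (r i) ∩ closedBall (x j) (r j)).Nonempty) :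
    (⋂ i, closedBall (x i) (r i)).Nonempty := by
  rcases isEmpty_or_nonempty ι with _ | hι
  · simp
  have hr i : 0 ≤ r i := nonempty_closedBall.1 ((h i i).mono Set.inter_subset_left)
  have hcoord i j a : x i a - r i ≤ x j a + r j := by
    have hdist : ‖x i - x j‖ ≤ r i + r j := by
      simpa only [dist_eq_norm] using dist_le_add_of_nonempty_closedBall_inter_closedBall (h i j)
    have ha : |x i a - x j a| ≤ r i + r j :=
      (norm_apply_le_norm ENNReal.top_ne_zero (x i - x j) a).trans hdist
    linarith [le_abs_self (x i a - x j a)]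
  set f : α → ℝ := fun a => ⨆ i, x i a - r i
  have hf j a : |f a - x j a| ≤ r j := abs_ciSup_sub_sub_le (hcoord · · a) j
  exact ⟨⟨f, memℓp_infty_of_abs_sub_le (x hι.some) (hf _)⟩,
    Set.mem_iInter.2 fun j => (mem_closedBall_infty_iff (hr j)).2 (hf j)⟩

end lp

theorem stmt8 (S : Type) :
    (∀ (ι : Type) (x : ι → lp (fun _ : S => ℝ) ⊤) (r : ι → ℝ),
      (∀ i j, (Metric.closedBall (x i) (r i) ∩ Metric.closedBall (x j) (r j)).Nonempty) →
      (⋂ i, Metric.closedBall (x i) (r i)).Nonempty) ∧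
    (∀ (x y : lp (fun _ : S => ℝ) ⊤) (r s : ℝ), 0 ≤ r → 0 ≤ s →
      ((Metric.closedBall x r ∩ Metric.closedBall y s).Nonempty ↔ ‖x - y‖ ≤ r + s)) :=
  ⟨fun _ x r h => lp.iInter_closedBall_infty_nonempty x r h,
    fun _ _ _ _ hr hs => by rw [closedBall_inter_closedBall_nonempty_iff hr hs, dist_eq_norm]⟩
end

section
/- Let K be a compact Hausdorff space with a Hausdorff gap in its algebra of clopen sets: there exist families of clopen sets (a_i)_{i<ω₁} increasing and (b_i)_{i<ω₁} decreasing with a_i ⊆ b_j for all i,j < ω₁ but no clopen set c with a_i ⊆ c ⊆ b_j for all i,j. Then the family of characteristic functions {χ_{a_i}} and {χ_{b_j}} witnesses the failure of the interpolation property: χ_{a_i} ≤ χ_{b_j} for all i,j, but if K is strongly zero-dimensional there is no h ∈ C(K) with χ_{a_i} ≤ h ≤ χ_{b_j} for all i,j. -/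
/-!
If `h ∈ C(K)` interpolated between the `χ_{a_i}` and the `χ_{b_j}`, the disjoint zero sets
`{h ≥ 1}` and `{h ≤ 0}` would be separated by a clopen set `c` by strong zero-dimensionality.
Then `a_i ⊆ {h ≥ 1} ⊆ c` and `c ⊆ {h > 0} ⊆ b_j`, so `c` would fill the gap.
-/

namespace ContinuousMap

variable {X : Type*} [TopologicalSpace X]

theorem exists_setOf_le_eq_setOf_eq_zero (f : C(X, ℝ)) (r : ℝ) :
    ∃ g : C(X, ℝ), {x | r ≤ f x} = {x | g x = 0} :=
  ⟨(f - const X r) ⊓ 0, by ext x; simp⟩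

theorem exists_setOf_ge_eq_setOf_eq_zero (f : C(X, ℝ)) (r : ℝ) :
    ∃ g : C(X, ℝ), {x | f x ≤ r} = {x | g x = 0} := by
  simpa only [neg_apply, neg_le_neg_iff] using exists_setOf_le_eq_setOf_eq_zero (-f) (-r)

end ContinuousMap

namespace Set

variable {α : Type*} {s : Set α} {h : α → ℝ}

theorem subset_setOf_one_le_of_indicator_one_le
    (hs : ∀ x, s.indicator (fun _ => (1 : ℝ)) x ≤ h x) :
    s ⊆ {x | 1 ≤ h x} := fun x hx =>
  (indicator_of_mem hx (fun _ => (1 : ℝ))).symm.trans_le (hs x)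

theorem setOf_pos_subset_of_le_indicator_one
    (hs : ∀ x, h x ≤ s.indicator (fun _ => (1 : ℝ)) x) :
    {x | 0 < h x} ⊆ s := fun x hx => by
  by_contra hxs
  exact (hx.trans_le (hs x)).ne (indicator_of_notMem hxs _).symm

end Set

theorem stmt12_general
    (K : Type) [TopologicalSpace K]
    -- K is strongly zero-dimensional: disjoint zero sets are separated by a clopen set
    (hsz : ∀ Z₁ Z₂ : Set K, (∃ f : C(K, ℝ), Z₁ = {x | f x = 0}) →
      (∃ f : C(K, ℝ), Z₂ = {x | f x = 0}) → Disjoint Z₁ Z₂ →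
      ∃ c : Set K, IsClopen c ∧ Z₁ ⊆ c ∧ Disjoint Z₂ c)
    -- a Hausdorff gap in the algebra of clopen sets, indexed by the ordinals below ω₁
    (a b : {i : Ordinal // i < (Cardinal.aleph 1).ord} → Set K)
    (hab : ∀ i j, a i ⊆ b j)
    (hgap : ¬ ∃ c : Set K, IsClopen c ∧ ∀ i j, a i ⊆ c ∧ c ⊆ b j) :
    (∀ i j (x : K), Set.indicator (a i) (fun _ => (1 : ℝ)) x ≤
        Set.indicator (b j) (fun _ => (1 : ℝ)) x) ∧
    ¬ ∃ h : C(K, ℝ), ∀ i j (x : K),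
        Set.indicator (a i) (fun _ => (1 : ℝ)) x ≤ h x ∧
        h x ≤ Set.indicator (b j) (fun _ => (1 : ℝ)) x := by
  refine ⟨fun i j => Set.indicator_le_indicator_of_subset (hab i j) fun _ => zero_le_one, ?_⟩
  rintro ⟨h, hh⟩
  have hdisj : Disjoint {x | 1 ≤ h x} {x | h x ≤ 0} :=
    Set.disjoint_left.mpr fun x (h1 : 1 ≤ h x) (h0 : h x ≤ 0) => by linarith
  obtain ⟨c, hc, hone_c, hc_pos⟩ := hsz _ _ (h.exists_setOf_le_eq_setOf_eq_zero 1)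
    (h.exists_setOf_ge_eq_setOf_eq_zero 0) hdisj
  refine hgap ⟨c, hc, fun i j => ⟨?_, ?_⟩⟩
  · exact (Set.subset_setOf_one_le_of_indicator_one_le fun x => (hh i j x).1).trans hone_c
  · intro x hxc
    apply Set.setOf_pos_subset_of_le_indicator_one fun x => (hh i j x).2
    exact lt_of_not_ge fun (hx : h x ≤ 0) => Set.disjoint_left.mp hc_pos hx hxc

theorem stmt12
    (K : Type) [TopologicalSpace K] [CompactSpace K] [T2Space K]
    [TotallyDisconnectedSpace K]
    -- K is strongly zero-dimensional: disjoint zero sets are separated by a clopen set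
    (hsz : ∀ Z₁ Z₂ : Set K, (∃ f : C(K, ℝ), Z₁ = {x | f x = 0}) →
      (∃ f : C(K, ℝ), Z₂ = {x | f x = 0}) → Disjoint Z₁ Z₂ →
      ∃ c : Set K, IsClopen c ∧ Z₁ ⊆ c ∧ Disjoint Z₂ c)
    -- a Hausdorff gap in the algebra of clopen sets, indexed by the ordinals below ω₁
    (a b : {i : Ordinal // i < (Cardinal.aleph 1).ord} → Set K)
    (ha : ∀ i, IsClopen (a i)) (hb : ∀ i, IsClopen (b i))
    (hamono : Monotone a) (hbanti : Antitone b)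
    (hab : ∀ i j, a i ⊆ b j)
    (hgap : ¬ ∃ c : Set K, IsClopen c ∧ ∀ i j, a i ⊆ c ∧ c ⊆ b j) :
    (∀ i j (x : K), Set.indicator (a i) (fun _ => (1 : ℝ)) x ≤
        Set.indicator (b j) (fun _ => (1 : ℝ)) x) ∧
    ¬ ∃ h : C(K, ℝ), ∀ i j (x : K),
        Set.indicator (a i) (fun _ => (1 : ℝ)) x ≤ h x ∧
        h x ≤ Set.indicator (b j) (fun _ => (1 : ℝ)) x :=
  stmt12_general K hsz a b hab hgap
end

section
/- For a compact Hausdorff space K and a cardinal ℵ, the following are equivalent: (1) every open cover of every subspace of K has a subcover of cardinality less than ℵ; (2) every open subset of K is the union of fewer than ℵ closed subsets of K. -/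
/-!
(1) ⇒ (2): by regularity each point of an open set `V` has a closed neighbourhood inside `V`;
the interiors of these neighbourhoods cover `V`, and fewer than `ℵ` of them suffice.
(2) ⇒ (1): write `⋃ Uᵢ` as a union of fewer than `ℵ` closed sets; each is compact, hence
covered by finitely many `Uᵢ`, and as `ℵ` is infinite, fewer than `ℵ` finite sets have a union
of size `< ℵ`.
-/

open Cardinal Topology

universe u

theorem Cardinal.mk_iUnion_lt_of_finite {α ι : Type u} {ℵ : Cardinal.{u}} (hℵ : ℵ₀ ≤ ℵ)
    (hι : #ι < ℵ) {t : ι → Set α} (ht : ∀ j, (t j).Finite) : #(⋃ j, t j) < ℵ := by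
  rcases finite_or_infinite ι with _ | _
  · exact (Set.finite_iUnion ht).lt_aleph0.trans_le hℵ
  · calc #(⋃ j, t j) ≤ #ι * ⨆ j, #(t j) := mk_iUnion_le t
      _ ≤ #ι * ℵ₀ := by gcongr; exact ciSup_le fun j => (ht j).lt_aleph0.le
      _ = #ι := mul_aleph0_eq (aleph0_le_mk ι)
      _ < ℵ := hι

section

variable {X : Type u} [TopologicalSpace X] {ℵ : Cardinal.{u}}

theorem IsOpen.exists_eq_iUnion_isClosed_of_subcover [RegularSpace X] {V : Set X}
    (hV : IsOpen V)
    (h : ∀ (U : V → Set X), (∀ x, IsOpen (U x)) → V ⊆ ⋃ x, U x →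
      ∃ s : Set V, #s < ℵ ∧ V ⊆ ⋃ x ∈ s, U x) :
    ∃ (ι : Type u) (C : ι → Set X), #ι < ℵ ∧ (∀ i, IsClosed (C i)) ∧ V = ⋃ i, C i := by
  have hnhds (x : V) : ∃ t ∈ 𝓝 (x : X), IsClosed t ∧ t ⊆ V :=
    exists_mem_nhds_isClosed_subset (hV.mem_nhds x.2)
  choose C hC_nhds hC_closed hC_sub using hnhds
  obtain ⟨s, hs, hcover⟩ := h (fun x => interior (C x)) (fun _ => isOpen_interior)
    fun y hy => Set.mem_iUnion.2 ⟨⟨y, hy⟩, mem_interior_iff_mem_nhds.2 (hC_nhds ⟨y, hy⟩)⟩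
  refine ⟨s, fun x => C x, hs, fun x => hC_closed x, ?_⟩
  refine (hcover.trans ?_).antisymm (Set.iUnion_subset fun x => hC_sub x)
  exact Set.iUnion₂_subset fun x hx =>
    interior_subset.trans (Set.subset_iUnion_of_subset ⟨x, hx⟩ le_rfl)

theorem exists_subcover_card_lt_of_isClosed [CompactSpace X] {ι κ : Type u} (hℵ : ℵ₀ ≤ ℵ)
    {U : ι → Set X} (hU : ∀ i, IsOpen (U i)) {C : κ → Set X} (hC : ∀ j, IsClosed (C j))
    (hκ : #κ < ℵ) (hCU : ∀ j, C j ⊆ ⋃ i, U i) :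
    ∃ s : Set ι, #s < ℵ ∧ ⋃ j, C j ⊆ ⋃ i ∈ s, U i := by
  have hfin (j : κ) : ∃ t : Finset ι, C j ⊆ ⋃ i ∈ t, U i :=
    (hC j).isCompact.elim_finite_subcover U hU (hCU j)
  choose t ht using hfin
  refine ⟨⋃ j, (t j : Set ι), mk_iUnion_lt_of_finite hℵ hκ fun j => (t j).finite_toSet, ?_⟩
  refine Set.iUnion_subset fun j => (ht j).trans ?_
  exact Set.biUnion_mono (Set.subset_iUnion (fun j => (t j : Set ι)) j) fun _ _ => le_rfl

end

theorem stmt13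
    (K : Type) [TopologicalSpace K] [CompactSpace K] [T2Space K]
    (ℵ : Cardinal) (hℵ : Cardinal.aleph0 ≤ ℵ) :
    (∀ (S : Set K) (ι : Type) (U : ι → Set K), (∀ i, IsOpen (U i)) → S ⊆ ⋃ i, U i →
        ∃ s : Set ι, #s < ℵ ∧ S ⊆ ⋃ i ∈ s, U i) ↔
    (∀ V : Set K, IsOpen V →
        ∃ (ι : Type) (C : ι → Set K), #ι < ℵ ∧ (∀ i, IsClosed (C i)) ∧ V = ⋃ i, C i) := by
  constructor
  · intro hcover V hV
    exact hV.exists_eq_iUnion_isClosed_of_subcover (hcover V V)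
  · intro hclosed S ι U hU hS
    obtain ⟨κ, C, hκ, hC, hUC⟩ := hclosed (⋃ i, U i) (isOpen_iUnion hU)
    obtain ⟨s, hs, hsub⟩ :=
      exists_subcover_card_lt_of_isClosed hℵ hU hC hκ fun j => hUC ▸ Set.subset_iUnion C j
    exact ⟨s, hs, hS.trans (hUC.trans_subset hsub)⟩
end

section
/- Let K be a compact Hausdorff space that is projective with respect to continuous surjections between compact Hausdorff spaces of weight less than ℵ, where ℵ is uncountable. Then K is zero-dimensional and an F_ℵ-space: any two disjoint open subsets of K, each a union of fewer than ℵ closed sets, are separated by a clopen set. -/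
open Cardinal

/-- The weight of a topological space: the least cardinality of a base for the topology. -/
noncomputable def tweight (X : Type) [TopologicalSpace X] : Cardinal :=
  sInf {c | ∃ B : Set (Set X), TopologicalSpace.IsTopologicalBasis B ∧ #B = c}

/-- `s` is a union of fewer than `ℵ` closed subsets of `K`. -/
def UnionLtClosed (K : Type) [TopologicalSpace K] (ℵ : Cardinal) (s : Set K) : Prop :=
  ∃ (ι : Type) (C : ι → Set K), #ι < ℵ ∧ (∀ i, IsClosed (C i)) ∧ s = ⋃ i, C i


/-!
Write the disjoint open sets as `G = ⋃ Cᵢ` and `H = ⋃ Dⱼ` with fewer than `ℵ` closed pieces.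
Urysohn functions that vanish on `Cᵢ` (resp. `Dⱼ`) and equal `1` off `G` (resp. `H`) assemble
into a map `F : K → ℝ^(ι ⊕ κ)`, whose target has weight `< ℵ`, such that `G` and `H` are unions
of fibres of `F`. The compact sets `A = F(K \ H)` and `B = F(K \ G)` cover `F(K)`; lifting `F`
along the surjection `A ⊕ B → A ∪ B` sorts the points of `K` into two clopen pieces, and the one
mapped into `A` contains `G` and misses `H`. Zero-dimensionality follows by separating two points
by the sets `{φ < 1/2}` and `{φ > 1/2}` of an Urysohn function `φ`, which are countable unions of
closed sets.
-/

open TopologicalSpace Set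

section Weight

lemma exists_isTopologicalBasis_mk_eq_tweight (X : Type) [TopologicalSpace X] :
    ∃ B : Set (Set X), IsTopologicalBasis B ∧ #B = tweight X :=
  csInf_mem (s := {c | ∃ B : Set (Set X), IsTopologicalBasis B ∧ #B = c})
    ⟨_, _, isTopologicalBasis_opens, rfl⟩

variable {X Y : Type} [TopologicalSpace X] [TopologicalSpace Y]

lemma tweight_le_mk {B : Set (Set X)} (hB : IsTopologicalBasis B) : tweight X ≤ #B :=
  csInf_le' ⟨B, hB, rfl⟩

lemma tweight_subtype_le (s : Set X) : tweight s ≤ tweight X := by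
  obtain ⟨B, hB, hBX⟩ := exists_isTopologicalBasis_mk_eq_tweight X
  exact (tweight_le_mk (isTopologicalBasis_subtype hB (· ∈ s))).trans (hBX ▸ mk_image_le)

lemma tweight_sum_le : tweight (X ⊕ Y) ≤ tweight X + tweight Y := by
  obtain ⟨BX, hBX, hX⟩ := exists_isTopologicalBasis_mk_eq_tweight X
  obtain ⟨BY, hBY, hY⟩ := exists_isTopologicalBasis_mk_eq_tweight Y
  calc tweight (X ⊕ Y) ≤ _ := tweight_le_mk (hBX.sum hBY)
    _ ≤ _ := mk_union_le _ _
    _ ≤ #BX + #BY := add_le_add mk_image_le mk_image_le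
    _ = _ := by rw [hX, hY]

lemma mk_finset_le_max (α : Type) : #(Finset α) ≤ max ℵ₀ #α := by
  classical exact (mk_le_of_surjective List.toFinset_surjective).trans (mk_list_le_max α)

lemma tweight_le_max_of_eq_generateFrom {s : Set (Set X)}
    (hs : ‹TopologicalSpace X› = generateFrom s) : tweight X ≤ max ℵ₀ #s := by
  refine (tweight_le_mk (isTopologicalBasis_of_subbasis hs)).trans ?_
  have : (fun f => ⋂₀ f) '' {f : Set (Set X) | f.Finite ∧ f ⊆ s} ⊆
      range fun t : Finset s => ⋂₀ (Subtype.val '' (t : Set s)) := by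
    rintro _ ⟨f, ⟨hf, hfs⟩, rfl⟩
    obtain ⟨t, rfl⟩ := subset_range_iff_exists_image_eq.1 (Subtype.range_coe (s := s) ▸ hfs)
    obtain ⟨t', rfl⟩ := (hf.of_finite_image Subtype.val_injective.injOn).exists_finset_coe
    exact ⟨t', rfl⟩
  exact (mk_le_mk_of_subset this).trans (mk_range_le.trans (mk_finset_le_max s))

lemma pi_eq_generateFrom_preimage_countableBasis (ι : Type) [SecondCountableTopology X] :
    (Pi.topologicalSpace : TopologicalSpace (ι → X)) =
      generateFrom (range fun p : ι × countableBasis X => (fun x => x p.1) ⁻¹' p.2) := by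
  have hX (i : ι) : induced (fun x : ι → X => x i) ‹_› =
      generateFrom (preimage (fun x : ι → X => x i) '' countableBasis X) := by
    conv_lhs => rw [eq_generateFrom_countableBasis X]
    exact induced_generateFrom_eq
  rw [Pi.topologicalSpace, funext hX, ← generateFrom_iUnion]
  congr 1
  ext s
  simp

lemma tweight_pi_lt [SecondCountableTopology X] {ι : Type} {ℵ : Cardinal} (hℵ : ℵ₀ < ℵ)
    (hι : #ι < ℵ) : tweight (ι → X) < ℵ := by
  refine (tweight_le_max_of_eq_generateFrom
    (pi_eq_generateFrom_preimage_countableBasis ι)).trans_lt (max_lt hℵ ?_)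
  calc _ ≤ #(ι × countableBasis X) := mk_range_le
    _ = #ι * #(countableBasis X) := by rw [mk_prod, lift_id, lift_id]
    _ ≤ #ι * ℵ₀ := by gcongr; exact (countable_countableBasis X).le_aleph0
    _ < ℵ := mul_lt_of_lt hℵ.le hι hℵ

end Weight

lemma IsOpen.unionLtClosed_preimage {K Y : Type} [TopologicalSpace K] [TopologicalSpace Y]
    [PerfectlyNormalSpace Y] {U : Set Y} (hU : IsOpen U) {ℵ : Cardinal} (hℵ : ℵ₀ < ℵ)
    (f : C(K, Y)) : UnionLtClosed K ℵ (f ⁻¹' U) := by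
  obtain ⟨T, hTo, hTc, hT⟩ := hU.isClosed_compl.isGδ
  refine ⟨T, fun t => f ⁻¹' (t : Set Y)ᶜ, hTc.le_aleph0.trans_lt hℵ,
    fun t => (hTo t t.2).isClosed_compl.preimage f.continuous, ?_⟩
  rw [← compl_compl U, hT, compl_sInter, sUnion_image, preimage_iUnion₂, iUnion_subtype]

lemma UnionLtClosed.exists_family_mem_of_forall_apply_eq {K : Type} [TopologicalSpace K]
    [NormalSpace K] {ℵ : Cardinal} {U : Set K} (hUℵ : UnionLtClosed K ℵ U) (hU : IsOpen U) :
    ∃ (ι : Type) (f : ι → C(K, ℝ)), #ι < ℵ ∧ ∀ x ∈ U, ∀ y, (∀ i, f i x = f i y) → y ∈ U := by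
  obtain ⟨ι, C, hι, hC, rfl⟩ := hUℵ
  have hurysohn (i : ι) : ∃ f : C(K, ℝ), EqOn f 0 (C i) ∧ EqOn f 1 (⋃ i, C i)ᶜ ∧ _ :=
    exists_continuous_zero_one_of_isClosed (hC i) hU.isClosed_compl
      (disjoint_compl_right.mono_left (subset_iUnion C i))
  choose f hf using hurysohn
  refine ⟨ι, f, hι, fun x hx y hxy => ?_⟩
  obtain ⟨i, hi⟩ := mem_iUnion.1 hx
  by_contra hy
  simpa [(hf i).1 hi, (hf i).2.1 hy] using hxy i

def ProjectiveBelow (K : Type) [TopologicalSpace K] (ℵ : Cardinal) : Prop :=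
  ∀ (L M : Type) [TopologicalSpace L] [CompactSpace L] [T2Space L]
      [TopologicalSpace M] [CompactSpace M] [T2Space M],
      tweight L < ℵ → tweight M < ℵ →
      ∀ π : C(L, M), Function.Surjective π →
      ∀ f : C(K, M), ∃ g : C(K, L), ∀ x : K, π (g x) = f x

namespace ProjectiveBelow

variable {K : Type} [TopologicalSpace K] {ℵ : Cardinal}

theorem exists_isClopen_mapsTo (hK : ProjectiveBelow K ℵ) (hℵ : ℵ₀ ≤ ℵ) {P : Type}
    [TopologicalSpace P] [T2Space P] (hP : tweight P < ℵ) (F : C(K, P)) {A B : Set P}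
    (hA : IsCompact A) (hB : IsCompact B) (hAB : ∀ x, F x ∈ A ∪ B) :
    ∃ c : Set K, IsClopen c ∧ MapsTo F c A ∧ MapsTo F cᶜ B := by
  have := isCompact_iff_compactSpace.1 hA
  have := isCompact_iff_compactSpace.1 hB
  have := isCompact_iff_compactSpace.1 (hA.union hB)
  let π : C(A ⊕ B, ↥(A ∪ B)) :=
    ⟨Sum.elim (inclusion subset_union_left) (inclusion subset_union_right),
      (continuous_inclusion _).sumElim (continuous_inclusion _)⟩
  have hπ : Function.Surjective π := by
    rintro ⟨p, hp | hp⟩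
    exacts [⟨.inl ⟨p, hp⟩, rfl⟩, ⟨.inr ⟨p, hp⟩, rfl⟩]
  have hL : tweight (A ⊕ B) < ℵ := tweight_sum_le.trans_lt
    (add_lt_of_lt hℵ ((tweight_subtype_le A).trans_lt hP) ((tweight_subtype_le B).trans_lt hP))
  obtain ⟨g, hg⟩ := hK (A ⊕ B) ↥(A ∪ B) hL ((tweight_subtype_le _).trans_lt hP) π hπ
    ⟨fun x => ⟨F x, hAB x⟩, by fun_prop⟩
  have hF (x : K) : F x = π (g x) := congrArg Subtype.val (hg x).symm
  refine ⟨g ⁻¹' range Sum.inl, isClopen_range_inl.preimage g.continuous, ?_, ?_⟩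
  · rintro x ⟨a, ha⟩
    simp [hF x, ← ha, π]
  · intro x hx
    rcases hgx : g x with a | b
    · exact absurd ⟨a, hgx.symm⟩ hx
    · simp [hF x, hgx, π]

theorem exists_isClopen_separating [CompactSpace K] [T2Space K] (hK : ProjectiveBelow K ℵ)
    (hℵ : ℵ₀ < ℵ) {G H : Set K} (hG : IsOpen G) (hH : IsOpen H) (hGH : Disjoint G H)
    (hGℵ : UnionLtClosed K ℵ G) (hHℵ : UnionLtClosed K ℵ H) :
    ∃ c : Set K, IsClopen c ∧ G ⊆ c ∧ Disjoint H c := by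
  obtain ⟨ι, f, hι, hf⟩ := hGℵ.exists_family_mem_of_forall_apply_eq hG
  obtain ⟨κ, g, hκ, hg⟩ := hHℵ.exists_family_mem_of_forall_apply_eq hH
  let F : C(K, ι ⊕ κ → ℝ) := .pi (Sum.elim f g)
  have hP : tweight (ι ⊕ κ → ℝ) < ℵ := by
    refine tweight_pi_lt hℵ ?_
    rw [mk_sum, lift_id, lift_id]
    exact add_lt_of_lt hℵ.le hι hκ
  have hcover (x : K) : F x ∈ F '' Hᶜ ∪ F '' Gᶜ := by
    by_cases hx : x ∈ H
    · exact .inr (mem_image_of_mem F (hGH.notMem_of_mem_right hx))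
    · exact .inl (mem_image_of_mem F hx)
  obtain ⟨c, hc, hcH, hcG⟩ := hK.exists_isClopen_mapsTo hℵ.le hP F
    (hH.isClosed_compl.isCompact.image F.continuous)
    (hG.isClosed_compl.isCompact.image F.continuous) hcover
  refine ⟨c, hc, fun x hxG => not_not.1 fun hxc => ?_, disjoint_left.2 fun x hxH hxc => ?_⟩
  · obtain ⟨y, hyG, hyx⟩ := hcG hxc
    exact hyG (hf x hxG y fun i => congrFun hyx.symm (.inl i))
  · obtain ⟨y, hyH, hyx⟩ := hcH hxc
    exact hyH (hg x hxH y fun j => congrFun hyx.symm (.inr j))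

theorem totallySeparatedSpace [CompactSpace K] [T2Space K] (hK : ProjectiveBelow K ℵ)
    (hℵ : ℵ₀ < ℵ) : TotallySeparatedSpace K := by
  refine totallySeparatedSpace_iff_exists_isClopen.2 fun x y hxy => ?_
  obtain ⟨φ, hφx, hφy, -⟩ := exists_continuous_zero_one_of_isClosed isClosed_singleton
    isClosed_singleton (disjoint_singleton.2 hxy)
  obtain ⟨c, hc, hGc, hHc⟩ := hK.exists_isClopen_separating hℵ
    (isOpen_Iio.preimage φ.continuous) (isOpen_Ioi.preimage φ.continuous)
    ((Iio_disjoint_Ioi_same (a := (1 / 2 : ℝ))).preimage φ)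
    (isOpen_Iio.unionLtClosed_preimage hℵ φ) (isOpen_Ioi.unionLtClosed_preimage hℵ φ)
  refine ⟨c, hc, hGc ?_, disjoint_left.1 hHc ?_⟩
  · simp [hφx rfl]
  · norm_num [hφy rfl]

end ProjectiveBelow

theorem stmt15
    (K : Type) [TopologicalSpace K] [CompactSpace K] [T2Space K]
    (ℵ : Cardinal) (hℵ : Cardinal.aleph0 < ℵ)
    (hproj : ∀ (L M : Type) [TopologicalSpace L] [CompactSpace L] [T2Space L]
      [TopologicalSpace M] [CompactSpace M] [T2Space M],
      tweight L < ℵ → tweight M < ℵ →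
      ∀ π : C(L, M), Function.Surjective π →
      ∀ f : C(K, M), ∃ g : C(K, L), ∀ x : K, π (g x) = f x) :
    TotallyDisconnectedSpace K ∧
    (∀ G H : Set K, IsOpen G → IsOpen H → Disjoint G H →
      UnionLtClosed K ℵ G → UnionLtClosed K ℵ H →
      ∃ c : Set K, IsClopen c ∧ G ⊆ c ∧ Disjoint H c) := by
  have hK : ProjectiveBelow K ℵ := hproj
  have := hK.totallySeparatedSpace hℵ
  exact ⟨inferInstance, fun G H hG hH hGH => hK.exists_isClopen_separating hℵ hG hH hGH⟩
end

section
/- Let K be a zero-dimensional compact F_ℵ-space, M a compact Hausdorff space in HL_ℵ, L a closed subset of M × {0,1}, and π : L → M the first-coordinate projection, assumed surjective. Then every continuous map f : K → M lifts: there exists continuous g : K → L with π ∘ g = f. -/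
/-!
A lift is `x ↦ (f x, c x)` for a continuous `c : K → Bool`. The value of `c` is forced only on
`f ⁻¹' {m | (m, true) ∉ L}` and on `f ⁻¹' {m | (m, false) ∉ L}`: these are disjoint (π is onto)
open sets, and as preimages of open subsets of `M ∈ HL_ℵ` they are unions of fewer than `ℵ`
closed sets. The `F_ℵ` property separates their closures, zero-dimensionality puts a clopen set
between them, and `c` is its indicator.
-/

open Cardinal

lemma UnionLtClosed.preimage {K M : Type} [TopologicalSpace K] [TopologicalSpace M]
    {ℵ : Cardinal} {s : Set M} (h : UnionLtClosed M ℵ s) (f : C(K, M)) :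
    UnionLtClosed K ℵ (f ⁻¹' s) := by
  obtain ⟨ι, C, hι, hC, rfl⟩ := h
  exact ⟨ι, fun i => f ⁻¹' C i, hι, fun i => (hC i).preimage f.continuous,
    Set.preimage_iUnion⟩

def IsFSpace (ℵ : Cardinal) (K : Type) [TopologicalSpace K] : Prop :=
  ∀ G H : Set K, IsOpen G → IsOpen H → Disjoint G H →
    UnionLtClosed K ℵ G → UnionLtClosed K ℵ H → Disjoint (closure G) (closure H)

lemma IsFSpace.exists_isClopen_separating {ℵ : Cardinal} {K : Type} [TopologicalSpace K]
    [CompactSpace K] [T2Space K] [TotallyDisconnectedSpace K] (hK : IsFSpace ℵ K)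
    {G H : Set K} (hG : IsOpen G) (hH : IsOpen H) (hGH : Disjoint G H)
    (hGℵ : UnionLtClosed K ℵ G) (hHℵ : UnionLtClosed K ℵ H) :
    ∃ V : Set K, IsClopen V ∧ G ⊆ V ∧ Disjoint V H := by
  obtain ⟨V, hV, hGV, hVH⟩ := exists_clopen_of_closed_subset_open isClosed_closure
    isClosed_closure.isOpen_compl (hK G H hG hH hGH hGℵ hHℵ).subset_compl_right
  exact ⟨V, hV, subset_closure.trans hGV,
    (Set.subset_compl_iff_disjoint_right.1 hVH).mono_right subset_closure⟩

theorem stmt16_general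
    (ℵ : Cardinal)
    (K : Type) [TopologicalSpace K] [CompactSpace K] [T2Space K]
    [TotallyDisconnectedSpace K]
    -- K is an F_ℵ-space
    (hK : ∀ G H : Set K, IsOpen G → IsOpen H → Disjoint G H →
      UnionLtClosed K ℵ G → UnionLtClosed K ℵ H →
      Disjoint (closure G) (closure H))
    (M : Type) [TopologicalSpace M]
    -- M belongs to HL_ℵ
    (hM : ∀ V : Set M, IsOpen V → UnionLtClosed M ℵ V)
    (L : Set (M × Bool)) (hL : IsClosed L)
    (hsurj : ∀ m : M, ∃ b : Bool, (m, b) ∈ L)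
    (f : C(K, M)) :
    ∃ g : C(K, L), ∀ x : K, ((g x : M × Bool)).1 = f x := by
  set excluded : Bool → Set M := fun b => (fun m => (m, b)) ⁻¹' Lᶜ
  have hopen (b : Bool) : IsOpen (excluded b) :=
    hL.isOpen_compl.preimage (Continuous.prodMk_left b)
  have hdisj : Disjoint (f ⁻¹' excluded false) (f ⁻¹' excluded true) := by
    refine Set.disjoint_left.2 fun x hfalse htrue => ?_
    obtain ⟨b, hb⟩ := hsurj (f x)
    cases b
    exacts [hfalse hb, htrue hb]
  obtain ⟨V, hV, hfalseV, hVtrue⟩ := IsFSpace.exists_isClopen_separating hK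
    ((hopen false).preimage f.continuous) ((hopen true).preimage f.continuous) hdisj
    ((hM _ (hopen false)).preimage f) ((hM _ (hopen true)).preimage f)
  have hmem (x : K) : (f x, V.boolIndicator x) ∈ L := by
    by_cases hx : x ∈ V
    · rw [(V.mem_iff_boolIndicator x).1 hx]
      exact not_not.1 (Set.disjoint_left.1 hVtrue hx)
    · rw [(V.notMem_iff_boolIndicator x).1 hx]
      exact not_not.1 fun h => hx (hfalseV h)
  refine ⟨⟨fun x => ⟨_, hmem x⟩, ?_⟩, fun x => rfl⟩
  exact (f.continuous.prodMk ((continuous_boolIndicator_iff_isClopen V).2 hV)).subtype_mk _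

theorem stmt16
    (ℵ : Cardinal) (hℵ : Cardinal.aleph0 < ℵ)
    (K : Type) [TopologicalSpace K] [CompactSpace K] [T2Space K]
    [TotallyDisconnectedSpace K]
    -- K is an F_ℵ-space
    (hK : ∀ G H : Set K, IsOpen G → IsOpen H → Disjoint G H →
      UnionLtClosed K ℵ G → UnionLtClosed K ℵ H →
      Disjoint (closure G) (closure H))
    (M : Type) [TopologicalSpace M] [CompactSpace M] [T2Space M]
    -- M belongs to HL_ℵ
    (hM : ∀ V : Set M, IsOpen V → UnionLtClosed M ℵ V)
    (L : Set (M × Bool)) (hL : IsClosed L)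
    (hsurj : ∀ m : M, ∃ b : Bool, (m, b) ∈ L)
    (f : C(K, M)) :
    ∃ g : C(K, L), ∀ x : K, ((g x : M × Bool)).1 = f x :=
  stmt16_general ℵ K hK M hM L hL hsurj f
end

section
/- There is no continuous map g : K → βℕ with π ∘ g = f, whenever K is a compact Hausdorff space that does not map continuously onto βℕ, f : K → αℕ is a continuous surjection onto the one-point compactification of ℕ, and π : βℕ → αℕ is the canonical map fixing ℕ and sending βℕ∖ℕ to the point at infinity. In fact, any continuous g : K → βℕ with π ∘ g = f must be surjective. -/
/-! Since `π` sends `βℕ ∖ ℕ` to `∞`, the fibre of `π` over `n ∈ ℕ` is `{n}`, so every lift `g` of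
the surjection `f` hits each `stoneCechUnit n`. The range of `g` is compact, hence closed, and contains
the dense set `ℕ ⊆ βℕ`, so `g` is onto; a lift would thus be a continuous surjection `K → βℕ`. -/

open Cardinal OnePoint

theorem Continuous.surjective_of_dense_subset_range {X Y : Type*} [TopologicalSpace X]
    [CompactSpace X] [TopologicalSpace Y] [T2Space Y] {g : X → Y} (hg : Continuous g)
    {s : Set Y} (hs : Dense s) (hsub : s ⊆ Set.range g) : Function.Surjective g := by
  have hclosure : closure s ⊆ Set.range g :=
    (isCompact_range hg).isClosed.closure_subset_iff.mpr hsub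
  rw [hs.closure_eq] at hclosure
  exact Set.range_eq_univ.mp (Set.eq_univ_of_univ_subset hclosure)

theorem eq_stoneCechUnit_of_apply_eq_coe {π : StoneCech ℕ → OnePoint ℕ}
    (hπ₁ : ∀ n : ℕ, π (stoneCechUnit n) = (n : OnePoint ℕ))
    (hπ₂ : ∀ x : StoneCech ℕ, (∀ n : ℕ, x ≠ stoneCechUnit n) → π x = ∞)
    {x : StoneCech ℕ} {n : ℕ} (hx : π x = n) : x = stoneCechUnit n := by
  by_cases hℕ : ∃ m : ℕ, x = stoneCechUnit m
  · obtain ⟨m, rfl⟩ := hℕ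
    rw [hπ₁, OnePoint.coe_eq_coe] at hx
    rw [hx]
  · push Not at hℕ
    rw [hπ₂ x hℕ] at hx
    exact absurd hx.symm (OnePoint.coe_ne_infty n)

theorem stmt17_general
    (K : Type) [TopologicalSpace K] [CompactSpace K]
    (hK : ¬ ∃ φ : C(K, StoneCech ℕ), Function.Surjective φ)
    (f : C(K, OnePoint ℕ)) (hf : Function.Surjective f)
    (π : C(StoneCech ℕ, OnePoint ℕ))
    (hπ₁ : ∀ n : ℕ, π (stoneCechUnit n) = (n : OnePoint ℕ))
    (hπ₂ : ∀ x : StoneCech ℕ, (∀ n : ℕ, x ≠ stoneCechUnit n) → π x = ∞) :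
    (∀ g : C(K, StoneCech ℕ), (∀ x : K, π (g x) = f x) → Function.Surjective g) ∧
    ¬ ∃ g : C(K, StoneCech ℕ), ∀ x : K, π (g x) = f x := by
  have lift_surjective : ∀ g : C(K, StoneCech ℕ), (∀ x : K, π (g x) = f x) →
      Function.Surjective g := by
    intro g hg
    refine g.continuous.surjective_of_dense_subset_range denseRange_stoneCechUnit ?_
    rintro _ ⟨n, rfl⟩
    obtain ⟨x, hx⟩ := hf n
    exact ⟨x, eq_stoneCechUnit_of_apply_eq_coe hπ₁ hπ₂ ((hg x).trans hx)⟩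
  exact ⟨lift_surjective, fun ⟨g, hg⟩ => hK ⟨g, lift_surjective g hg⟩⟩

theorem stmt17
    (K : Type) [TopologicalSpace K] [CompactSpace K] [T2Space K]
    (hK : ¬ ∃ φ : C(K, StoneCech ℕ), Function.Surjective φ)
    (f : C(K, OnePoint ℕ)) (hf : Function.Surjective f)
    (π : C(StoneCech ℕ, OnePoint ℕ))
    (hπ₁ : ∀ n : ℕ, π (stoneCechUnit n) = (n : OnePoint ℕ))
    (hπ₂ : ∀ x : StoneCech ℕ, (∀ n : ℕ, x ≠ stoneCechUnit n) → π x = ∞) :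
    (∀ g : C(K, StoneCech ℕ), (∀ x : K, π (g x) = f x) → Function.Surjective g) ∧
    ¬ ∃ g : C(K, StoneCech ℕ), ∀ x : K, π (g x) = f x :=
  stmt17_general K hK f hf π hπ₁ hπ₂
end
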